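/- arXiv:2405.05344 — 2 statements merged into one kernel-verified Lean document; each statement's English description precedes it below -/
import Mathlib

section
/- Let $g_1,\ldots,g_p$ be i.i.d. standard normal random variables and let $|g|_{(1)} \ge \cdots \ge |g|_{(p)}$ denote the order statistics of their absolute values. Then for all $2 \le k \le p$, $\mathbb{E}|g|_{(k)} \le \sqrt{2\log(2p/(k-1))}$. -/
/-!
At least `k` of the `|gᵢ|` are `≥ |g|₍ₖ₎`, so `k e^{t |g|₍ₖ₎} ≤ ∑ᵢ e^{t |gᵢ|}` for `t ≥ 0`.
Taking expectations, with `𝔼 e^{t |gᵢ|} ≤ 2 e^{t²/2}`, and applying Jensen's inequality gives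
`e^{t 𝔼 |g|₍ₖ₎} ≤ (2p/k) e^{t²/2}`. The choice `t = √(2 log (2p/k))` yields
`𝔼 |g|₍ₖ₎ ≤ √(2 log (2p/k)) ≤ √(2 log (2p/(k-1)))`.
-/

open MeasureTheory ProbabilityTheory

/-- The `k`-th largest entry (1-indexed) of a vector `v : Fin p → ℝ`. -/
noncomputable def kthLargest {p : ℕ} (v : Fin p → ℝ) (k : ℕ) : ℝ :=
  sSup {x : ℝ | k ≤ (Finset.univ.filter fun i => x ≤ v i).card}

open Real Finset

open scoped NNReal

section kthLargest

variable {p k : ℕ} (v : Fin p → ℝ)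

theorem isGreatest_kthLargest (hk : 1 ≤ k) (hkp : k ≤ p) :
    IsGreatest {x : ℝ | k ≤ #{i | x ≤ v i}} (kthLargest v k) := by
  set S := {x : ℝ | k ≤ #{i | x ≤ v i}}
  -- the smallest `v i` above `x` is again in `S`, so `S` has a greatest element among the `v i`
  have le_value_mem : ∀ x ∈ S, ∃ j, v j ∈ S ∧ x ≤ v j := by
    intro x hx
    obtain ⟨j, hj, hmin⟩ :=
      exists_min_image {i | x ≤ v i} v (card_pos.mp (lt_of_lt_of_le hk hx))
    refine ⟨j, le_trans hx (card_le_card fun i hi => ?_), (mem_filter.mp hj).2⟩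
    exact mem_filter.mpr ⟨mem_univ i, hmin i hi⟩
  obtain ⟨b, hb⟩ := (Set.finite_range v).bddBelow
  have hbS : b ∈ S := by
    simpa [S, filter_true_of_mem fun i _ => hb (Set.mem_range_self i)] using hkp
  obtain ⟨j₀, hj₀, -⟩ := le_value_mem b hbS
  obtain ⟨j, hj, hmax⟩ := exists_max_image {j | v j ∈ S} v ⟨j₀, by simpa using hj₀⟩
  have hgreatest : IsGreatest S (v j) := by
    refine ⟨(mem_filter.mp hj).2, fun x hx => ?_⟩
    obtain ⟨i, hi, hxi⟩ := le_value_mem x hx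
    exact hxi.trans (hmax i (by simpa using hi))
  rwa [kthLargest, hgreatest.csSup_eq]

theorem le_kthLargest_iff (hk : 1 ≤ k) (hkp : k ≤ p) {x : ℝ} :
    x ≤ kthLargest v k ↔ k ≤ #{i | x ≤ v i} := by
  have h := isGreatest_kthLargest v hk hkp
  refine ⟨fun hx => h.1.trans (card_le_card fun i hi => ?_), fun hx => h.2 hx⟩
  exact mem_filter.mpr ⟨mem_univ i, hx.trans (mem_filter.mp hi).2⟩

theorem kthLargest_nonneg (hk : 1 ≤ k) (hkp : k ≤ p) (hv : ∀ i, 0 ≤ v i) :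
    0 ≤ kthLargest v k :=
  (le_kthLargest_iff v hk hkp).2 (by simpa [hv] using hkp)

theorem natCast_mul_apply_kthLargest_le_sum (hk : 1 ≤ k) (hkp : k ≤ p) {f : ℝ → ℝ}
    (hf : Monotone f) (hf₀ : ∀ x, 0 ≤ f x) :
    k * f (kthLargest v k) ≤ ∑ i, f (v i) := by
  have hcard : k ≤ #{i | kthLargest v k ≤ v i} := (le_kthLargest_iff v hk hkp).1 le_rfl
  calc (k : ℝ) * f (kthLargest v k) ≤ #{i | kthLargest v k ≤ v i} • f (kthLargest v k) := by
        rw [nsmul_eq_mul]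
        gcongr
        exact hf₀ _
    _ ≤ ∑ i ∈ {i | kthLargest v k ≤ v i}, f (v i) :=
        card_nsmul_le_sum _ _ _ fun i hi => hf (mem_filter.mp hi).2
    _ ≤ ∑ i, f (v i) := sum_le_sum_of_subset_of_nonneg (filter_subset _ _) fun i _ _ => hf₀ _

theorem natCast_mul_exp_mul_kthLargest_le_sum {t : ℝ} (ht : 0 ≤ t)
    (hk : 1 ≤ k) (hkp : k ≤ p) :
    k * exp (t * kthLargest v k) ≤ ∑ i, exp (t * v i) :=
  natCast_mul_apply_kthLargest_le_sum v hk hkp (f := fun x => exp (t * x))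
    (fun _ _ hab => exp_le_exp.2 (mul_le_mul_of_nonneg_left hab ht)) fun _ => (exp_pos _).le

theorem measurable_kthLargest {Ω : Type*} [MeasurableSpace Ω] {f : Fin p → Ω → ℝ}
    (hf : ∀ i, Measurable (f i)) (hk : 1 ≤ k) (hkp : k ≤ p) :
    Measurable fun ω => kthLargest (fun i => f i ω) k := by
  refine measurable_of_Ici fun x => ?_
  have hcount : Measurable fun ω => ∑ i, if x ≤ f i ω then 1 else 0 :=
    Finset.measurable_sum _ fun i _ =>
      Measurable.ite (measurableSet_le measurable_const (hf i)) measurable_const measurable_const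
  have hpre : (fun ω => kthLargest (fun i => f i ω) k) ⁻¹' Set.Ici x
      = (fun ω => ∑ i, if x ≤ f i ω then 1 else 0) ⁻¹' Set.Ici k := by
    ext ω
    simp only [Set.mem_preimage, Set.mem_Ici, le_kthLargest_iff _ hk hkp, card_filter]
  rw [hpre]
  exact hcount measurableSet_Ici

end kthLargest

section Moments

variable {Ω : Type*} {m : MeasurableSpace Ω} {μ : Measure Ω} {X : Ω → ℝ} {t : ℝ}

theorem mgf_abs_le_mgf_add_mgf_neg (hpos : Integrable (fun ω => exp (t * X ω)) μ)
    (hneg : Integrable (fun ω => exp (-t * X ω)) μ) :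
    mgf (fun ω => |X ω|) μ t ≤ mgf X μ t + mgf X μ (-t) := by
  rw [mgf, mgf, mgf, ← integral_add hpos hneg]
  refine integral_mono (integrable_exp_mul_abs hpos hneg) (hpos.add hneg) fun ω => ?_
  rcases abs_cases (X ω) with ⟨h, -⟩ | ⟨h, -⟩
  · simp only [h, le_add_iff_nonneg_right, (exp_pos _).le]
  · simp only [h, mul_neg, ← neg_mul, le_add_iff_nonneg_left, (exp_pos _).le]

theorem exp_mul_integral_le_mgf [IsProbabilityMeasure μ] (hX : Integrable X μ)
    (hexp : Integrable (fun ω => exp (t * X ω)) μ) :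
    exp (t * ∫ ω, X ω ∂μ) ≤ mgf X μ t := by
  have h := convexOn_exp.map_integral_le continuous_exp.continuousOn isClosed_univ
    (ae_of_all _ fun _ => Set.mem_univ _) (hX.const_mul t) hexp
  rwa [integral_const_mul] at h

theorem integrable_of_integrable_exp_mul_of_nonneg (ht : 0 < t) (hX : AEStronglyMeasurable X μ)
    (hX₀ : ∀ ω, 0 ≤ X ω) (hexp : Integrable (fun ω => exp (t * X ω)) μ) :
    Integrable X μ := by
  refine (hexp.const_mul t⁻¹).mono' hX (ae_of_all _ fun ω => ?_)
  rw [norm_of_nonneg (hX₀ ω), le_inv_mul_iff₀ ht]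
  linarith [add_one_le_exp (t * X ω)]

theorem integrable_exp_mul_of_map_eq_gaussianReal [IsProbabilityMeasure μ] {m₀ : ℝ} {v : ℝ≥0}
    (hX : μ.map X = gaussianReal m₀ v) (t : ℝ) :
    Integrable (fun ω => exp (t * X ω)) μ := by
  rw [← mgf_pos_iff, mgf_gaussianReal hX]
  exact exp_pos _

theorem mgf_abs_le_of_map_eq_gaussianReal [IsProbabilityMeasure μ] {v : ℝ≥0}
    (hX : μ.map X = gaussianReal 0 v) (t : ℝ) :
    mgf (fun ω => |X ω|) μ t ≤ 2 * exp (v * t ^ 2 / 2) :=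
  calc mgf (fun ω => |X ω|) μ t ≤ mgf X μ t + mgf X μ (-t) :=
        mgf_abs_le_mgf_add_mgf_neg (integrable_exp_mul_of_map_eq_gaussianReal hX t)
          (integrable_exp_mul_of_map_eq_gaussianReal hX (-t))
    _ = 2 * exp (v * t ^ 2 / 2) := by
        rw [mgf_gaussianReal hX, mgf_gaussianReal hX]
        ring_nf

end Moments

theorem le_sqrt_two_mul_log_of_exp_mul_le {a A : ℝ} (hA : 1 < A)
    (h : exp (√(2 * log A) * a) ≤ A * exp (√(2 * log A) ^ 2 / 2)) :
    a ≤ √(2 * log A) := by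
  set t := √(2 * log A)
  have hlog : 0 < log A := log_pos hA
  have ht : 0 < t := sqrt_pos.2 (by positivity)
  have ht2 : t ^ 2 = 2 * log A := sq_sqrt (by positivity)
  have hta : t * a ≤ t * t := by
    have := log_le_log (exp_pos _) h
    rw [log_exp, log_mul (by positivity) (exp_pos _).ne', log_exp] at this
    nlinarith
  exact le_of_mul_le_mul_left hta ht

section kthLargestMoments

variable {Ω : Type*} {m : MeasurableSpace Ω} {μ : Measure Ω} {p k : ℕ} {Y : Fin p → Ω → ℝ} {t : ℝ}

theorem integrable_exp_mul_kthLargest (hY : ∀ i, Measurable (Y i))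
    (hint : ∀ i, Integrable (fun ω => exp (t * Y i ω)) μ) (ht : 0 ≤ t) (hk : 1 ≤ k) (hkp : k ≤ p) :
    Integrable (fun ω => exp (t * kthLargest (fun i => Y i ω) k)) μ := by
  refine (integrable_finsetSum univ fun i _ => hint i).mono'
    (measurable_exp.comp ((measurable_kthLargest hY hk hkp).const_mul t)).aestronglyMeasurable
    (ae_of_all _ fun ω => ?_)
  rw [norm_of_nonneg (exp_pos _).le]
  exact le_trans (le_mul_of_one_le_left (exp_pos _).le (by exact_mod_cast hk))
    (natCast_mul_exp_mul_kthLargest_le_sum _ ht hk hkp)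

theorem natCast_mul_mgf_kthLargest_le_sum_mgf (hY : ∀ i, Measurable (Y i))
    (hint : ∀ i, Integrable (fun ω => exp (t * Y i ω)) μ) (ht : 0 ≤ t) (hk : 1 ≤ k) (hkp : k ≤ p) :
    k * mgf (fun ω => kthLargest (fun i => Y i ω) k) μ t ≤ ∑ i, mgf (Y i) μ t := by
  simp only [mgf, ← integral_const_mul, ← integral_finsetSum univ fun i _ => hint i]
  exact integral_mono ((integrable_exp_mul_kthLargest hY hint ht hk hkp).const_mul _)
    (integrable_finsetSum univ fun i _ => hint i) fun ω =>
      natCast_mul_exp_mul_kthLargest_le_sum _ ht hk hkp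

theorem integral_kthLargest_le_of_mgf_le [IsProbabilityMeasure μ] (hY : ∀ i, Measurable (Y i))
    (hY₀ : ∀ i ω, 0 ≤ Y i ω) (hint : ∀ i t, Integrable (fun ω => exp (t * Y i ω)) μ)
    (hmgf : ∀ i t, mgf (Y i) μ t ≤ 2 * exp (t ^ 2 / 2)) (hk : 1 ≤ k) (hkp : k ≤ p) :
    ∫ ω, kthLargest (fun i => Y i ω) k ∂μ ≤ √(2 * log (2 * p / k)) := by
  set X := fun ω => kthLargest (fun i => Y i ω) k
  have hk₀ : (0 : ℝ) < k := by exact_mod_cast hk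
  have hA : 1 < 2 * (p : ℝ) / k := by
    rw [one_lt_div hk₀]
    have : (k : ℝ) ≤ p := by exact_mod_cast hkp
    linarith
  set t := √(2 * log (2 * p / k))
  have ht : 0 < t := sqrt_pos.2 (by linarith [log_pos hA])
  have hexp := integrable_exp_mul_kthLargest hY (fun i => hint i t) ht.le hk hkp
  have hX : Integrable X μ :=
    integrable_of_integrable_exp_mul_of_nonneg ht
      (measurable_kthLargest hY hk hkp).aestronglyMeasurable
      (fun ω => kthLargest_nonneg _ hk hkp fun i => hY₀ i ω) hexp
  refine le_sqrt_two_mul_log_of_exp_mul_le hA ?_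
  calc exp (t * ∫ ω, X ω ∂μ) ≤ mgf X μ t := exp_mul_integral_le_mgf hX hexp
    _ ≤ (∑ i, mgf (Y i) μ t) / k := by
        rw [le_div_iff₀ hk₀, mul_comm]
        exact natCast_mul_mgf_kthLargest_le_sum_mgf hY (fun i => hint i t) ht.le hk hkp
    _ ≤ (∑ _i : Fin p, 2 * exp (t ^ 2 / 2)) / k := by
        gcongr with i
        exact hmgf i t
    _ = 2 * p / k * exp (t ^ 2 / 2) := by
        rw [sum_const, card_univ, Fintype.card_fin, nsmul_eq_mul]
        ring

end kthLargestMoments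

theorem gaussian_order_stat_mean_bound_general {Ω : Type*} [MeasureSpace Ω]
    [IsProbabilityMeasure (ℙ : Measure Ω)]
    (p : ℕ) (g : Fin p → Ω → ℝ)
    (hmeas : ∀ i, Measurable (g i))
    (hgauss : ∀ i, Measure.map (g i) ℙ = gaussianReal 0 1)
    (k : ℕ) (hk : 2 ≤ k) (hkp : k ≤ p) :
    ∫ ω, kthLargest (fun i => |g i ω|) k ∂ℙ ≤
      Real.sqrt (2 * Real.log (2 * p / ((k : ℝ) - 1))) := by
  have hintegrable (i : Fin p) (t : ℝ) := integrable_exp_mul_of_map_eq_gaussianReal (hgauss i) t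
  have hmgf (i : Fin p) (t : ℝ) : mgf (fun ω => |g i ω|) ℙ t ≤ 2 * exp (t ^ 2 / 2) := by
    simpa using mgf_abs_le_of_map_eq_gaussianReal (hgauss i) t
  calc ∫ ω, kthLargest (fun i => |g i ω|) k ∂ℙ ≤ √(2 * log (2 * p / k)) :=
        integral_kthLargest_le_of_mgf_le (fun i => (hmeas i).abs) (fun _ _ => abs_nonneg _)
          (fun i t => integrable_exp_mul_abs (hintegrable i t) (hintegrable i (-t))) hmgf
          (by omega) hkp
    _ ≤ √(2 * log (2 * p / (k - 1))) := by
        have hk₁ : (1 : ℝ) < k := by exact_mod_cast hk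
        have hp : (0 : ℝ) < p := by exact_mod_cast (by omega : 0 < p)
        gcongr
        linarith

/-- Expected value of Gaussian order statistics: for `2 ≤ k ≤ p`,
`E |g|_(k) ≤ √(2 log(2p/(k-1)))`. -/
theorem gaussian_order_stat_mean_bound {Ω : Type*} [MeasureSpace Ω]
    [IsProbabilityMeasure (ℙ : Measure Ω)]
    (p : ℕ) (g : Fin p → Ω → ℝ)
    (hmeas : ∀ i, Measurable (g i))
    (hindep : iIndepFun g ℙ)
    (hgauss : ∀ i, Measure.map (g i) ℙ = gaussianReal 0 1)
    (k : ℕ) (hk : 2 ≤ k) (hkp : k ≤ p) :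
    ∫ ω, kthLargest (fun i => |g i ω|) k ∂ℙ ≤
      Real.sqrt (2 * Real.log (2 * p / ((k : ℝ) - 1))) :=
  gaussian_order_stat_mean_bound_general p g hmeas hgauss k hk hkp
end

section
/- Let $y = X\beta + z$, let $\hat{\beta}^L$ be a Lasso solution with tuning parameter $\lambda$, and let $\tilde{\beta}^O = \eta_\lambda(\beta + X^T z/n)$ be the oracle soft thresholding estimator. Suppose there exists a set $S_* \subseteq \{1,\ldots,p\}$ containing the supports of $\hat{\beta}^L$, $\tilde{\beta}^O$, and $\beta$, such that all eigenvalues of $X_{S_*}^T X_{S_*}/n$ lie in $[1-\Delta, 1+\Delta]$ for some $\Delta \in (0,1)$. Then $\|\tilde{\beta}^O - \hat{\beta}^L\|_2 \le \frac{\Delta}{1-\Delta}\|\tilde{\beta}^O - \beta\|_2$. -/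
/-!
Write `y = Xβ + z`, `d = bO - bL`, `w = bO - β` and `G = XᵀX / n`. Minimality of the Lasso
solution along the segment towards `bO` gives `⟨y - X bL, X d⟩ / n ≤ λ(‖bO‖₁ - ‖bL‖₁)`, and soft
thresholding is the proximal map of `λ‖·‖₁`, so `⟨β + Xᵀz/n - bO, bL - bO⟩ ≤ λ(‖bL‖₁ - ‖bO‖₁)`.
Adding the two, the noise `z` and the penalties cancel, leaving `⟨d, G d⟩ ≤ ⟨w, (G - I) d⟩`. All
three vectors live on `S`, where the eigenvalue bounds give `(1 - Δ)‖d‖² ≤ ⟨d, G d⟩` and, by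
polarization, `⟨w, (G - I) d⟩ ≤ Δ‖w‖‖d‖`; hence `(1 - Δ)‖d‖ ≤ Δ‖w‖`.
-/

open Matrix

/-- The soft thresholding function `η_λ(u) = sign(u)(|u| - λ)₊`. -/
noncomputable def softThreshold (lam u : ℝ) : ℝ :=
  Real.sign u * max (|u| - lam) 0

open Filter Topology Set

lemma mem_pi_compl_bot_iff {ι : Type*} (S : Finset ι) (v : ι → ℝ) :
    v ∈ Submodule.pi (↑S : Set ι)ᶜ (fun _ => (⊥ : Submodule ℝ ℝ)) ↔ ∀ j, v j ≠ 0 → j ∈ S := by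
  simp only [Submodule.mem_pi, Submodule.mem_bot, Set.mem_compl_iff, Finset.mem_coe]
  exact forall_congr' fun j => not_imp_comm

variable {ι m : Type*} [Fintype ι] [Fintype m]

lemma sum_sq_eq_dotProduct_self (v : ι → ℝ) : ∑ i, v i ^ 2 = v ⬝ᵥ v := by
  simp only [dotProduct, sq]

lemma dotProduct_self_nonneg (v : ι → ℝ) : 0 ≤ v ⬝ᵥ v := by
  simpa using dotProduct_self_star_nonneg v

lemma nonneg_of_forall_nonneg_add_mul {a b : ℝ} (h : ∀ t : ℝ, 0 < t → t ≤ 1 → 0 ≤ a + t * b) :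
    0 ≤ a := by
  have hlim : Tendsto (fun t : ℝ => a + t * b) (𝓝[>] 0) (𝓝 a) :=
    (Continuous.tendsto' (f := fun t : ℝ => a + t * b) (by fun_prop) 0 a (by simp)).mono_left
      nhdsWithin_le_nhds
  refine ge_of_tendsto hlim ?_
  filter_upwards [Ioo_mem_nhdsGT one_pos] with t ht using h t ht.1 ht.2.le

lemma convexOn_mul_sum_abs {lam : ℝ} (hlam : 0 ≤ lam) :
    ConvexOn ℝ univ fun b : ι → ℝ => lam * ∑ j, |b j| := by
  refine ⟨convex_univ, fun x _ y _ a c ha hc hac => ?_⟩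
  simp only [smul_eq_mul, Pi.add_apply, Pi.smul_apply]
  have hsum : ∑ j, |a * x j + c * y j| ≤ a * ∑ j, |x j| + c * ∑ j, |y j| := by
    rw [Finset.mul_sum, Finset.mul_sum, ← Finset.sum_add_distrib]
    refine Finset.sum_le_sum fun j _ => (abs_add_le _ _).trans_eq ?_
    rw [abs_mul, abs_mul, abs_of_nonneg ha, abs_of_nonneg hc]
  linarith [mul_le_mul_of_nonneg_left hsum hlam]

lemma dotProduct_residual_le_of_forall_le {g : (ι → ℝ) → ℝ} (hg : ConvexOn ℝ univ g)
    (X : Matrix m ι ℝ) (y : m → ℝ) (s : ℝ) {bL : ι → ℝ}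
    (hmin : ∀ b, s / 2 * ((y - X *ᵥ bL) ⬝ᵥ (y - X *ᵥ bL)) + g bL ≤
      s / 2 * ((y - X *ᵥ b) ⬝ᵥ (y - X *ᵥ b)) + g b)
    (b : ι → ℝ) :
    s * ((y - X *ᵥ bL) ⬝ᵥ X *ᵥ (b - bL)) ≤ g b - g bL := by
  set r := y - X *ᵥ bL
  set e := X *ᵥ (b - bL)
  suffices 0 ≤ g b - g bL - s * (r ⬝ᵥ e) by linarith
  refine nonneg_of_forall_nonneg_add_mul (b := s / 2 * (e ⬝ᵥ e)) fun t ht ht1 => ?_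
  have hconv : g ((1 - t) • bL + t • b) ≤ (1 - t) * g bL + t * g b :=
    hg.2 (mem_univ _) (mem_univ _) (by linarith) ht.le (by ring)
  have hres : y - X *ᵥ ((1 - t) • bL + t • b) = r - t • e := by
    simp only [r, e, mulVec_add, mulVec_smul, mulVec_sub, sub_smul, one_smul, smul_sub]
    abel
  have hexp : (r - t • e) ⬝ᵥ (r - t • e) = r ⬝ᵥ r - 2 * t * (r ⬝ᵥ e) + t ^ 2 * (e ⬝ᵥ e) := by
    simp only [sub_dotProduct, dotProduct_sub, smul_dotProduct, dotProduct_smul, smul_eq_mul,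
      dotProduct_comm e r]
    ring
  have h := hmin ((1 - t) • bL + t • b)
  rw [hres, hexp] at h
  refine nonneg_of_mul_nonneg_right ?_ ht
  linarith

/-- Soft thresholding is the proximal map of `λ|·|`. -/
lemma sub_softThreshold_mul_sub_le {lam : ℝ} (hlam : 0 ≤ lam) (u b : ℝ) :
    (u - softThreshold lam u) * (b - softThreshold lam u) ≤
      lam * (|b| - |softThreshold lam u|) := by
  have hb := le_abs_self b
  have hb' := neg_abs_le b
  unfold softThreshold
  rcases le_or_gt |u| lam with h | h
  · rw [max_eq_right (by linarith), mul_zero, sub_zero, sub_zero, abs_zero, sub_zero]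
    nlinarith [abs_mul_abs_self u, le_abs_self (u * b), abs_mul u b, abs_nonneg b]
  · rw [max_eq_left (by linarith)]
    rcases lt_trichotomy u 0 with hu | rfl | hu
    · have he : Real.sign u * (|u| - lam) = u + lam := by
        rw [Real.sign_of_neg hu, abs_of_neg hu]; ring
      rw [abs_of_neg hu] at h
      rw [he, abs_of_neg (by linarith : u + lam < 0)]
      nlinarith
    · simp only [abs_zero] at h
      linarith
    · have he : Real.sign u * (|u| - lam) = u - lam := by
        rw [Real.sign_of_pos hu, abs_of_pos hu]; ring
      rw [abs_of_pos hu] at h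
      rw [he, abs_of_pos (by linarith : 0 < u - lam)]
      nlinarith

lemma dotProduct_sub_softThreshold_le {lam : ℝ} (hlam : 0 ≤ lam) (u b : ι → ℝ) :
    (u - fun j => softThreshold lam (u j)) ⬝ᵥ (b - fun j => softThreshold lam (u j)) ≤
      lam * ∑ j, |b j| - lam * ∑ j, |softThreshold lam (u j)| := by
  rw [← mul_sub, ← Finset.sum_sub_distrib, Finset.mul_sum]
  exact Finset.sum_le_sum fun j _ => sub_softThreshold_mul_sub_le hlam (u j) (b j)

/-- `hprox` says that `bO` is the proximal point of `g` at `β + s Xᵀz`. -/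
lemma sq_mulVec_sub_le_of_forall_le {g : (ι → ℝ) → ℝ} (hg : ConvexOn ℝ univ g)
    (X : Matrix m ι ℝ) (β : ι → ℝ) (z : m → ℝ) (s : ℝ) {bL bO : ι → ℝ}
    (hmin : ∀ b, s / 2 * ((X *ᵥ β + z - X *ᵥ bL) ⬝ᵥ (X *ᵥ β + z - X *ᵥ bL)) + g bL ≤
      s / 2 * ((X *ᵥ β + z - X *ᵥ b) ⬝ᵥ (X *ᵥ β + z - X *ᵥ b)) + g b)
    (hprox : ∀ b, (β + s • (Xᵀ *ᵥ z) - bO) ⬝ᵥ (b - bO) ≤ g b - g bO) :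
    s * (X *ᵥ (bO - bL) ⬝ᵥ X *ᵥ (bO - bL)) ≤
      s * (X *ᵥ (bO - β) ⬝ᵥ X *ᵥ (bO - bL)) - (bO - β) ⬝ᵥ (bO - bL) := by
  have hlasso := dotProduct_residual_le_of_forall_le hg X _ s hmin bO
  have horacle := hprox bL
  have hres : X *ᵥ β + z - X *ᵥ bL = X *ᵥ (bO - bL) - X *ᵥ (bO - β) + z := by
    simp only [mulVec_sub]; abel
  have hcenter : β + s • (Xᵀ *ᵥ z) - bO = s • (Xᵀ *ᵥ z) - (bO - β) := by abel
  have hflip : bL - bO = -(bO - bL) := (neg_sub _ _).symm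
  rw [hres] at hlasso
  rw [hcenter, hflip] at horacle
  simp only [add_dotProduct, sub_dotProduct, dotProduct_neg, smul_dotProduct, smul_eq_mul,
    mulVec_transpose, ← dotProduct_mulVec] at hlasso horacle ⊢
  linarith

section RestrictedIsometry

variable (X : Matrix m ι ℝ) {s Δ : ℝ} {V : Submodule ℝ (ι → ℝ)}
  (hV : ∀ v ∈ V, (1 - Δ) * (v ⬝ᵥ v) ≤ s * (X *ᵥ v ⬝ᵥ X *ᵥ v) ∧
    s * (X *ᵥ v ⬝ᵥ X *ᵥ v) ≤ (1 + Δ) * (v ⬝ᵥ v))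
include hV

lemma two_mul_sub_dotProduct_le {u w : ι → ℝ} (hu : u ∈ V) (hw : w ∈ V) :
    2 * (s * (X *ᵥ u ⬝ᵥ X *ᵥ w) - u ⬝ᵥ w) ≤ Δ * (u ⬝ᵥ u + w ⬝ᵥ w) := by
  have hplus := (hV _ (V.add_mem hu hw)).2
  have hminus := (hV _ (V.sub_mem hu hw)).1
  simp only [mulVec_add, mulVec_sub, add_dotProduct, dotProduct_add, sub_dotProduct,
    dotProduct_sub, dotProduct_comm w u, dotProduct_comm (X *ᵥ w) (X *ᵥ u)] at hplus hminus
  linarith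

lemma sub_dotProduct_le_mul_sqrt {u w : ι → ℝ} (hu : u ∈ V) (hw : w ∈ V) :
    s * (X *ᵥ u ⬝ᵥ X *ᵥ w) - u ⬝ᵥ w ≤ Δ * √(u ⬝ᵥ u) * √(w ⬝ᵥ w) := by
  rcases eq_or_ne u 0 with rfl | hu0
  · simp
  rcases eq_or_ne w 0 with rfl | hw0
  · simp
  have ha2 := Real.sq_sqrt (dotProduct_self_nonneg u)
  have hc2 := Real.sq_sqrt (dotProduct_self_nonneg w)
  have ha : 0 < √(u ⬝ᵥ u) := Real.sqrt_pos.2 <| (dotProduct_self_nonneg u).lt_of_ne' <|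
    dotProduct_self_eq_zero.not.2 hu0
  have hc : 0 < √(w ⬝ᵥ w) := Real.sqrt_pos.2 <| (dotProduct_self_nonneg w).lt_of_ne' <|
    dotProduct_self_eq_zero.not.2 hw0
  -- polarize at the rescaled vectors `‖w‖ u` and `‖u‖ w`, which have the same length
  have h := two_mul_sub_dotProduct_le X hV (V.smul_mem √(w ⬝ᵥ w) hu) (V.smul_mem √(u ⬝ᵥ u) hw)
  set a := √(u ⬝ᵥ u)
  set c := √(w ⬝ᵥ w)
  simp only [mulVec_smul, smul_dotProduct, dotProduct_smul, smul_eq_mul, ← ha2, ← hc2] at h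
  have hscaled : 2 * (a * c) * (s * (X *ᵥ u ⬝ᵥ X *ᵥ w) - u ⬝ᵥ w) ≤ 2 * (a * c) * (Δ * a * c) := by
    linarith
  exact le_of_mul_le_mul_left hscaled (by positivity)

end RestrictedIsometry

lemma le_div_mul_of_mul_sq_le {a c Δ : ℝ} (ha : 0 ≤ a) (hc : 0 ≤ c) (hΔ0 : 0 ≤ Δ) (hΔ1 : Δ < 1)
    (h : (1 - Δ) * a ^ 2 ≤ Δ * c * a) : a ≤ Δ / (1 - Δ) * c := by
  rw [div_mul_eq_mul_div, le_div_iff₀ (sub_pos.2 hΔ1)]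
  rcases ha.eq_or_lt with rfl | hpos
  · exact (zero_mul _).trans_le (mul_nonneg hΔ0 hc)
  · exact le_of_mul_le_mul_right (by linarith) hpos

theorem lasso_close_to_oracle_general {n p : ℕ}
    (X : Matrix (Fin n) (Fin p) ℝ) (β : Fin p → ℝ) (z : Fin n → ℝ)
    (lam : ℝ) (hlam : 0 < lam)
    (bL : Fin p → ℝ)
    (hmin : ∀ b : Fin p → ℝ,
      (1 / (2 * n)) * ∑ i, ((X.mulVec β + z) i - X.mulVec bL i) ^ 2 + lam * ∑ j, |bL j| ≤
        (1 / (2 * n)) * ∑ i, ((X.mulVec β + z) i - X.mulVec b i) ^ 2 + lam * ∑ j, |b j|)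
    (bO : Fin p → ℝ)
    (hbO : bO = fun j => softThreshold lam (β j + (Xᵀ.mulVec z) j / n))
    (Δ : ℝ) (hΔ : Δ ∈ Set.Ioo (0 : ℝ) 1)
    (S : Finset (Fin p))
    (hsuppL : ∀ j, bL j ≠ 0 → j ∈ S)
    (hsuppO : ∀ j, bO j ≠ 0 → j ∈ S)
    (hsuppβ : ∀ j, β j ≠ 0 → j ∈ S)
    (heig : ∀ v : Fin p → ℝ, (∀ j, v j ≠ 0 → j ∈ S) →
      (1 - Δ) * ∑ j, (v j) ^ 2 ≤ (1 / n) * ∑ i, (X.mulVec v i) ^ 2 ∧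
        (1 / n) * ∑ i, (X.mulVec v i) ^ 2 ≤ (1 + Δ) * ∑ j, (v j) ^ 2) :
    Real.sqrt (∑ j, (bO j - bL j) ^ 2) ≤
      (Δ / (1 - Δ)) * Real.sqrt (∑ j, (bO j - β j) ^ 2) := by
  set V : Submodule ℝ (Fin p → ℝ) := Submodule.pi (↑S : Set (Fin p))ᶜ fun _ => ⊥
  have hV : ∀ v ∈ V, (1 - Δ) * (v ⬝ᵥ v) ≤ 1 / n * (X *ᵥ v ⬝ᵥ X *ᵥ v) ∧
      1 / n * (X *ᵥ v ⬝ᵥ X *ᵥ v) ≤ (1 + Δ) * (v ⬝ᵥ v) := fun v hv => by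
    simpa only [sum_sq_eq_dotProduct_self] using heig v ((mem_pi_compl_bot_iff S v).1 hv)
  have hloss (b : Fin p → ℝ) : 1 / (2 * n) * ∑ i, ((X *ᵥ β + z) i - (X *ᵥ b) i) ^ 2 =
      1 / n / 2 * ((X *ᵥ β + z - X *ᵥ b) ⬝ᵥ (X *ᵥ β + z - X *ᵥ b)) := by
    rw [← sum_sq_eq_dotProduct_self]
    simp only [Pi.sub_apply]
    ring
  have hbO' : bO = fun j => softThreshold lam ((β + (1 / n : ℝ) • (Xᵀ *ᵥ z)) j) := by
    rw [hbO]; ext j; simp [div_eq_inv_mul]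
  have hbasic := sq_mulVec_sub_le_of_forall_le (convexOn_mul_sum_abs hlam.le) X β z (1 / n)
    (bL := bL) (bO := bO) (fun b => by rw [← hloss, ← hloss]; exact hmin b)
    (fun b => by rw [hbO']; exact dotProduct_sub_softThreshold_le hlam.le _ b)
  have hO := (mem_pi_compl_bot_iff S bO).2 hsuppO
  have hd : bO - bL ∈ V := V.sub_mem hO ((mem_pi_compl_bot_iff S bL).2 hsuppL)
  have hw : bO - β ∈ V := V.sub_mem hO ((mem_pi_compl_bot_iff S β).2 hsuppβ)
  have hlower := (hV _ hd).1
  have hrip := sub_dotProduct_le_mul_sqrt X hV hw hd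
  change √(∑ j, (bO - bL) j ^ 2) ≤ Δ / (1 - Δ) * √(∑ j, (bO - β) j ^ 2)
  rw [sum_sq_eq_dotProduct_self, sum_sq_eq_dotProduct_self]
  rw [← Real.sq_sqrt (dotProduct_self_nonneg (bO - bL))] at hlower
  exact le_div_mul_of_mul_sq_le (Real.sqrt_nonneg _) (Real.sqrt_nonneg _) hΔ.1.le hΔ.2
    (by linarith)

/-- If the supports of the Lasso solution `bL`, the oracle estimator `bO` and the truth `β`
are contained in a set `S` on which the eigenvalues of `X_Sᵀ X_S / n` lie in `[1-Δ, 1+Δ]`,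
then `‖bO - bL‖₂ ≤ (Δ/(1-Δ)) ‖bO - β‖₂`. -/
theorem lasso_close_to_oracle {n p : ℕ} (hn : 0 < n)
    (X : Matrix (Fin n) (Fin p) ℝ) (β : Fin p → ℝ) (z : Fin n → ℝ)
    (lam : ℝ) (hlam : 0 < lam)
    (bL : Fin p → ℝ)
    (hmin : ∀ b : Fin p → ℝ,
      (1 / (2 * n)) * ∑ i, ((X.mulVec β + z) i - X.mulVec bL i) ^ 2 + lam * ∑ j, |bL j| ≤
        (1 / (2 * n)) * ∑ i, ((X.mulVec β + z) i - X.mulVec b i) ^ 2 + lam * ∑ j, |b j|)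
    (bO : Fin p → ℝ)
    (hbO : bO = fun j => softThreshold lam (β j + (Xᵀ.mulVec z) j / n))
    (Δ : ℝ) (hΔ : Δ ∈ Set.Ioo (0 : ℝ) 1)
    (S : Finset (Fin p))
    (hsuppL : ∀ j, bL j ≠ 0 → j ∈ S)
    (hsuppO : ∀ j, bO j ≠ 0 → j ∈ S)
    (hsuppβ : ∀ j, β j ≠ 0 → j ∈ S)
    (heig : ∀ v : Fin p → ℝ, (∀ j, v j ≠ 0 → j ∈ S) →
      (1 - Δ) * ∑ j, (v j) ^ 2 ≤ (1 / n) * ∑ i, (X.mulVec v i) ^ 2 ∧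
        (1 / n) * ∑ i, (X.mulVec v i) ^ 2 ≤ (1 + Δ) * ∑ j, (v j) ^ 2) :
    Real.sqrt (∑ j, (bO j - bL j) ^ 2) ≤
      (Δ / (1 - Δ)) * Real.sqrt (∑ j, (bO j - β j) ^ 2) :=
  lasso_close_to_oracle_general X β z lam hlam bL hmin bO hbO Δ hΔ S hsuppL hsuppO hsuppβ heig
end
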